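/- arXiv:2108.06381 — 5 statements merged into one kernel-verified Lean document; each statement's English description precedes it below -/
import Mathlib

section
/- If the districts have equal population, then m/n = (α + β̄ − 1)/(ᾱ + β̄ − 1); moreover the denominator ᾱ + β̄ − 1 is strictly positive. -/
/-!
The seats-votes identity is pure bookkeeping: since every district is majority-A or majority-B,
the total A-vote is `m ᾱ + (n - m)(1 - β̄)`, and dividing `n α` by `n` and rearranging gives the
formula. The denominator is positive because each of `ᾱ`, `β̄` is an average of numbers
exceeding `1/2`.
-/

open Finset

lemma Finset.lt_sum_div_card {ι K : Type*} [Field K] [LinearOrder K] [IsStrictOrderedRing K]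
    {s : Finset ι} {f : ι → K} {c : K} (hs : s.Nonempty) (h : ∀ i ∈ s, c < f i) :
    c < (∑ i ∈ s, f i) / #s := by
  rw [← expect_eq_sum_div_card]
  obtain ⟨i, hi⟩ := hs
  exact lt_expect (fun x hx => (h x hx).le) ⟨i, hi, h i hi⟩

lemma Finset.sum_eq_sum_add_card_compl_sub {ι K : Type*} [Fintype ι] [DecidableEq ι] [Ring K]
    (s : Finset ι) (f : ι → K) :
    ∑ i, f i = ∑ i ∈ s, f i + (#sᶜ - ∑ i ∈ sᶜ, (1 - f i)) := by
  rw [← sum_add_sum_compl s f, sum_sub_distrib, sum_const, nsmul_one, sub_sub_cancel]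

lemma seat_share_eq {K : Type*} [Field K] {n m A B : K} (hm : m ≠ 0) (hnm : n - m ≠ 0)
    (hn : n ≠ 0) (hden : A / m + B / (n - m) - 1 ≠ 0) :
    m / n = ((A + (n - m - B)) / n + B / (n - m) - 1) / (A / m + B / (n - m) - 1) := by
  rw [div_eq_div_iff hn hden]
  field_simp
  ring

lemma filter_half_lt_one_sub_eq_compl {ι : Type*} [Fintype ι] [DecidableEq ι] {a : ι → ℝ}
    (hne : ∀ i, a i ≠ 1 / 2) :
    univ.filter (fun i => 1 / 2 < 1 - a i) = (univ.filter (fun i => 1 / 2 < a i))ᶜ := by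
  rw [compl_filter]
  refine filter_congr fun i _ => ?_
  rw [not_lt, le_iff_lt_or_eq, or_iff_left (hne i)]
  constructor <;> intro h <;> linarith

theorem districting_seat_share_general
    (n : ℕ) (a : Fin n → ℝ)
    (hne : ∀ i, a i ≠ 1/2)
    (m : ℕ) (hm : m = (univ.filter (fun i => 1/2 < a i)).card)
    (hm0 : 0 < m) (hmn : m < n)
    (α abar bbar : ℝ)
    (hα : α = (∑ i, a i) / n)
    (habar : abar = (∑ i ∈ univ.filter (fun i => 1/2 < a i), a i) / m)
    (hbbar : bbar = (∑ i ∈ univ.filter (fun i => 1/2 < 1 - a i), (1 - a i)) / ((n:ℝ) - m)) :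
    (m:ℝ)/n = (α + bbar - 1)/(abar + bbar - 1) ∧ 0 < abar + bbar - 1 := by
  set S := univ.filter (fun i => 1/2 < a i)
  have hB : univ.filter (fun i => 1/2 < 1 - a i) = Sᶜ := filter_half_lt_one_sub_eq_compl hne
  have hcardN : #Sᶜ = n - m := by rw [card_compl, Fintype.card_fin, hm]
  have hcard : (#Sᶜ : ℝ) = n - m := by rw [hcardN, Nat.cast_sub hmn.le]
  have habar_gt : 1 / 2 < abar := by
    rw [habar, hm]
    exact lt_sum_div_card (card_pos.mp (hm ▸ hm0)) fun i hi => (mem_filter.mp hi).2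
  have hbbar_gt : 1 / 2 < bbar := by
    rw [hbbar, hB, ← hcard]
    exact lt_sum_div_card (card_pos.mp (hcardN ▸ Nat.sub_pos_of_lt hmn))
      fun i hi => by rw [← hB] at hi; exact (mem_filter.mp hi).2
  have hden : 0 < abar + bbar - 1 := by linarith
  refine ⟨?_, hden⟩
  have hm0R : (0 : ℝ) < m := by exact_mod_cast hm0
  have hmnR : (m : ℝ) < n := by exact_mod_cast hmn
  rw [habar, hbbar, hB] at hden ⊢
  rw [hα, sum_eq_sum_add_card_compl_sub S, hcard]
  exact seat_share_eq hm0R.ne' (sub_pos.2 hmnR).ne' (hm0R.trans hmnR).ne' hden.ne'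

/-- With equal-population districts,
`m/n = (α + β̄ − 1)/(ᾱ + β̄ − 1)`, and the denominator `ᾱ + β̄ − 1` is
strictly positive. -/
theorem districting_seat_share
    (n : ℕ) (hn : 0 < n) (a : Fin n → ℝ)
    (ha : ∀ i, a i ∈ Set.Icc (0:ℝ) 1) (hne : ∀ i, a i ≠ 1/2)
    (m : ℕ) (hm : m = (univ.filter (fun i => 1/2 < a i)).card)
    (hm0 : 0 < m) (hmn : m < n)
    (α β abar bbar : ℝ)
    (hα : α = (∑ i, a i) / n) (hβ : β = 1 - α)
    (habar : abar = (∑ i ∈ univ.filter (fun i => 1/2 < a i), a i) / m)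
    (hbbar : bbar = (∑ i ∈ univ.filter (fun i => 1/2 < 1 - a i), (1 - a i)) / ((n:ℝ) - m)) :
    (m:ℝ)/n = (α + bbar - 1)/(abar + bbar - 1) ∧ 0 < abar + bbar - 1 :=
  districting_seat_share_general n a hne m hm hm0 hmn α abar bbar hα habar hbbar
end

section
/- If the districts have equal population, then 1/2 + (n/m)·(α − 1/2) < ᾱ and ᾱ ≤ min{1, (n/m)·α}. -/
open Finset

/-!
Split the total vote `n α = ∑ᵢ αᵢ` into the majority-`A` part `m ᾱ` and the rest. Every other
district has `αᵢ < 1/2`, and there is at least one, so the rest is `< (n - m)/2`; this gives the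
lower bound. The upper bounds hold because each `αᵢ ≤ 1` and the rest is nonnegative.
-/

theorem sum_lt_card_mul_of_lt {ι : Type*} {s : Finset ι} (hs : s.Nonempty) {f : ι → ℝ} {c : ℝ}
    (hf : ∀ i ∈ s, f i < c) : ∑ i ∈ s, f i < #s * c := by
  simpa using sum_lt_sum_of_nonempty hs hf

theorem sum_lt_sum_majority_add_half {ι : Type*} [Fintype ι] (a : ι → ℝ)
    (hne : ∀ i, a i ≠ 1/2) (hlt : #{i | 1/2 < a i} < Fintype.card ι) :
    ∑ i, a i < ∑ i with 1/2 < a i, a i + ((Fintype.card ι : ℝ) - #{i | 1/2 < a i}) / 2 := by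
  have hcard : #{i | 1/2 < a i} + #{i | ¬ 1/2 < a i} = Fintype.card ι :=
    card_filter_add_card_filter_not _
  have hrest : ∑ i with ¬ 1/2 < a i, a i < #{i | ¬ 1/2 < a i} * (1/2 : ℝ) := by
    refine sum_lt_card_mul_of_lt (card_pos.mp (by omega)) fun i hi => ?_
    exact lt_of_le_of_ne (not_lt.mp (mem_filter.mp hi).2) (hne i)
  rw [← sum_filter_add_sum_filter_not univ (fun i => 1/2 < a i), ← hcard, Nat.cast_add]
  linarith

theorem districting_abar_bounds_general
    (n : ℕ) (a : Fin n → ℝ)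
    (ha : ∀ i, a i ∈ Set.Icc (0:ℝ) 1) (hne : ∀ i, a i ≠ 1/2)
    (m : ℕ) (hm : m = (univ.filter (fun i => 1/2 < a i)).card)
    (hm0 : 0 < m) (hmn : m < n)
    (α abar : ℝ)
    (hα : α = (∑ i, a i) / n)
    (habar : abar = (∑ i ∈ univ.filter (fun i => 1/2 < a i), a i) / m) :
    1/2 + (n:ℝ)/m * (α - 1/2) < abar ∧ abar ≤ min 1 ((n:ℝ)/m * α) := by
  have hmR : (0:ℝ) < m := by exact_mod_cast hm0
  have hnR : (n:ℝ) ≠ 0 := by exact_mod_cast (Nat.zero_lt_of_lt hmn).ne'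
  have hlow := sum_lt_sum_majority_add_half a hne (by rwa [Fintype.card_fin, ← hm])
  have hle_card : ∑ i with 1/2 < a i, a i ≤ m := by
    simpa [hm] using sum_le_card_nsmul _ a 1 fun i _ => (ha i).2
  have hle_sum : ∑ i with 1/2 < a i, a i ≤ ∑ i, a i :=
    sum_le_univ_sum_of_nonneg fun i => (ha i).1
  rw [← hm, Fintype.card_fin] at hlow
  subst hα habar
  generalize ∑ i with 1/2 < a i, a i = A at *
  generalize ∑ i, a i = T at *
  refine ⟨?_, le_min ?_ ?_⟩
  · rw [lt_div_iff₀ hmR]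
    field_simp
    linarith
  · rwa [div_le_one hmR]
  · rw [div_le_iff₀ hmR]
    field_simp
    linarith

/-- With equal-population districts,
`1/2 + (n/m)(α − 1/2) < ᾱ ≤ min{1, (n/m)·α}`. -/
theorem districting_abar_bounds
    (n : ℕ) (hn : 0 < n) (a : Fin n → ℝ)
    (ha : ∀ i, a i ∈ Set.Icc (0:ℝ) 1) (hne : ∀ i, a i ≠ 1/2)
    (m : ℕ) (hm : m = (univ.filter (fun i => 1/2 < a i)).card)
    (hm0 : 0 < m) (hmn : m < n)
    (α β abar bbar : ℝ)
    (hα : α = (∑ i, a i) / n) (hβ : β = 1 - α)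
    (habar : abar = (∑ i ∈ univ.filter (fun i => 1/2 < a i), a i) / m)
    (hbbar : bbar = (∑ i ∈ univ.filter (fun i => 1/2 < 1 - a i), (1 - a i)) / ((n:ℝ) - m)) :
    1/2 + (n:ℝ)/m * (α - 1/2) < abar ∧ abar ≤ min 1 ((n:ℝ)/m * α) :=
  districting_abar_bounds_general n a ha hne m hm hm0 hmn α abar hα habar
end

section
/- Let n be a positive integer and β ∈ (0, 1/2) a real number. Define K = 2nβ − 1 if 2nβ is an integer, and K = ⌊2nβ⌋ otherwise. Then there exist real numbers α_1, …, α_n ∈ [0,1] with (1/n)·∑_{i=1}^n (1 − α_i) = β such that the number of indices i with 1 − α_i > 1/2 is at least K. That is, with equal-population districts, a minority party holding a fraction β of the overall vote can be allotted at least K majority-B districts. -/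
open Finset

/-! K = ⌈2nβ⌉ - 1 is the largest integer below 2nβ, so K < 2nβ < n. Giving B the share
min(1, nβ/K) > 1/2 in K districts uses at most nβ of its vote, and what is left, at most
n - K, is spread evenly over the other n - K districts. -/

theorem Int.eq_ceil_sub_one_of_cases {x : ℝ} {K : ℤ}
    (hint : (∃ k : ℤ, x = k) → (K : ℝ) = x - 1) (hfrac : (¬∃ k : ℤ, x = k) → K = ⌊x⌋) :
    K = ⌈x⌉ - 1 := by
  by_cases hx : ∃ k : ℤ, x = k
  · obtain ⟨k, rfl⟩ := hx
    rw [Int.ceil_intCast]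
    exact_mod_cast hint ⟨k, rfl⟩
  · have hceil : ⌈x⌉ = ⌊x⌋ + 1 :=
      (Int.ceil_eq_floor_add_one_iff_notMem x).2 fun ⟨k, hk⟩ => hx ⟨k, hk.symm⟩
    rw [hfrac hx, hceil, add_sub_cancel_right]

section TwoLevel

variable {n m : ℕ} {c r : ℝ}

def twoLevelPlan (n m : ℕ) (c r : ℝ) : Fin n → ℝ := fun i => if (i : ℕ) < m then c else r

theorem card_filter_val_lt_of_le (hm : m ≤ n) : #{i : Fin n | (i : ℕ) < m} = m := by
  rw [Fin.card_filter_val_lt, min_eq_right hm]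

theorem sum_twoLevelPlan (hm : m ≤ n) :
    ∑ i, twoLevelPlan n m c r i = m * c + (n - m) * r := by
  have hcompl : #{i : Fin n | ¬(i : ℕ) < m} = n - m := by
    have := card_filter_add_card_filter_not (s := univ) (fun i : Fin n => (i : ℕ) < m)
    rw [card_filter_val_lt_of_le hm, card_univ, Fintype.card_fin] at this
    omega
  simp only [twoLevelPlan, sum_ite, sum_const, card_filter_val_lt_of_le hm, hcompl, nsmul_eq_mul,
    Nat.cast_sub hm]

theorem le_card_filter_twoLevelPlan (hm : m ≤ n) (hc : 1 / 2 < c) :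
    m ≤ #{i | 1 / 2 < twoLevelPlan n m c r i} := by
  calc m = #{i : Fin n | (i : ℕ) < m} := (card_filter_val_lt_of_le hm).symm
    _ ≤ #{i | 1 / 2 < twoLevelPlan n m c r i} :=
      card_le_card fun i hi => by
        simp only [mem_filter, mem_univ, true_and] at hi ⊢
        simpa only [twoLevelPlan, if_pos hi] using hc

end TwoLevel

theorem exists_plan_le_card_majority {n m : ℕ} {β : ℝ} (hmn : m < n) (hβ1 : β ≤ 1)
    (hm : (m : ℝ) < 2 * n * β) :
    ∃ b : Fin n → ℝ, (∀ i, b i ∈ Set.Icc 0 1) ∧ ∑ i, b i = n * β ∧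
      m ≤ #{i | 1 / 2 < b i} := by
  have hmn' : (m : ℝ) < n := by exact_mod_cast hmn
  have hβ0 : 0 ≤ β := by nlinarith [(m.cast_nonneg : (0 : ℝ) ≤ m)]
  have hnβ : n * β ≤ n := mul_le_of_le_one_right n.cast_nonneg hβ1
  set c := min 1 (n * β / m)
  set r := (n * β - m * c) / (n - m)
  have hc : c ∈ Set.Icc 0 1 := ⟨le_min zero_le_one (by positivity), min_le_left _ _⟩
  have hmc : m * c = min (m : ℝ) (n * β) := by
    rcases (Nat.zero_le m).eq_or_lt with rfl | hm0
    · simp [mul_nonneg n.cast_nonneg hβ0]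
    · rw [mul_min_of_nonneg _ _ m.cast_nonneg, mul_one, mul_div_cancel₀ _ (by positivity)]
  have hc_half : 0 < m → 1 / 2 < c := fun hm0 => by
    refine lt_min (by norm_num) ?_
    rw [lt_div_iff₀ (by exact_mod_cast hm0)]
    linarith
  have hr : r ∈ Set.Icc 0 1 := by
    refine ⟨div_nonneg ?_ (by linarith), (div_le_one (by linarith)).2 ?_⟩
    · linarith [min_le_right (m : ℝ) (n * β)]
    · rcases min_cases (m : ℝ) (n * β) with ⟨h, _⟩ | ⟨h, _⟩ <;> linarith
  refine ⟨twoLevelPlan n m c r, fun i => ?_, ?_, ?_⟩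
  · unfold twoLevelPlan; split_ifs <;> assumption
  · rw [sum_twoLevelPlan hmn.le, mul_div_cancel₀ _ (by linarith)]
    ring
  · rcases (Nat.zero_le m).eq_or_lt with rfl | hm0
    · exact Nat.zero_le _
    · exact le_card_filter_twoLevelPlan hmn.le (hc_half hm0)

/-- With `n` equal-population districts and minority vote
fraction `β ∈ (0, 1/2)`, letting `K = 2nβ − 1` if `2nβ` is an integer and
`K = ⌊2nβ⌋` otherwise, there is a districting plan in which at least `K`
districts are majority-B. -/
theorem gerrymander_minority_seats
    (n : ℕ) (hn : 0 < n) (β : ℝ) (hβ0 : 0 < β) (hβ : β < 1/2)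
    (K : ℤ)
    (hK1 : (∃ k : ℤ, 2*(n:ℝ)*β = (k:ℝ)) → (K:ℝ) = 2*(n:ℝ)*β - 1)
    (hK2 : (¬ ∃ k : ℤ, 2*(n:ℝ)*β = (k:ℝ)) → K = ⌊2*(n:ℝ)*β⌋) :
    ∃ a : Fin n → ℝ, (∀ i, a i ∈ Set.Icc (0:ℝ) 1) ∧
      (1/(n:ℝ)) * ∑ i, (1 - a i) = β ∧
      K ≤ (((univ.filter (fun i => 1/2 < 1 - a i)).card : ℤ)) := by
  have hK : K = ⌈2 * (n : ℝ) * β⌉ - 1 := Int.eq_ceil_sub_one_of_cases hK1 hK2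
  have hK0 : 0 ≤ K := by
    have := Int.ceil_pos.2 (by positivity : 0 < 2 * (n : ℝ) * β)
    omega
  have hmK : (K.toNat : ℤ) = K := Int.toNat_of_nonneg hK0
  have hm : (K.toNat : ℝ) < 2 * n * β := by
    rw [show (K.toNat : ℝ) = K by exact_mod_cast hmK, hK]
    push_cast
    linarith [Int.ceil_lt_add_one (2 * (n : ℝ) * β)]
  have hmn : K.toNat < n := by
    have : (K.toNat : ℝ) < n := by nlinarith [(n.cast_nonneg : (0 : ℝ) ≤ n)]
    exact_mod_cast this
  obtain ⟨b, hb, hbsum, hbcard⟩ := exists_plan_le_card_majority hmn (by linarith) hm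
  refine ⟨fun i => 1 - b i, fun i => ⟨by linarith [(hb i).2], by linarith [(hb i).1]⟩, ?_, ?_⟩
  · simp only [sub_sub_cancel, hbsum]
    field_simp
  · simp only [sub_sub_cancel]
    rw [← hmK]
    exact_mod_cast hbcard
end

section
/- Suppose the districts have equal population, every district has margin δ > 0, β > 0, and Δ = α − β = 1 − 2β is the voting margin in the population as a whole. Then the proportionality ratio ρ = (1 − m/n)/β satisfies ρ = (1 − Δ/δ)/(1 − Δ). -/
open Finset

/-!
Every district takes one of only two values, `(1 + δ)/2` or `(1 - δ)/2`, according to which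
party wins it, so the mean support is `α = (1 - δ)/2 + δ·m/n`. Hence `Δ = 2α - 1 = δ(2m/n - 1)`,
which gives `1 - Δ/δ = 2(1 - m/n)` and `1 - Δ = 2β`.
-/

lemma eq_of_margin {a δ : ℝ} (hδ : 0 < δ) (h : a - (1 - a) = δ ∨ (1 - a) - a = δ) :
    a = (1 - δ) / 2 + δ * if 1 / 2 < a then 1 else 0 := by
  rcases h with h | h
  · rw [if_pos (by linarith)]; linarith
  · rw [if_neg (by linarith)]; linarith

lemma sum_eq_of_margin {ι : Type*} [Fintype ι] {a : ι → ℝ} {δ : ℝ} (hδ : 0 < δ)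
    (hmarg : ∀ i, a i - (1 - a i) = δ ∨ (1 - a i) - a i = δ) :
    ∑ i, a i = Fintype.card ι * ((1 - δ) / 2) + δ * #{i | 1 / 2 < a i} := by
  rw [Finset.sum_congr rfl fun i _ => eq_of_margin hδ (hmarg i), sum_add_distrib, ← mul_sum,
    sum_boole, sum_const, card_univ, nsmul_eq_mul]

theorem proportionality_ratio_uniform_margin_general
    (n : ℕ) (hn : 0 < n) (a : Fin n → ℝ)
    (δ : ℝ) (hδ : 0 < δ)
    (hmarg : ∀ i, a i - (1 - a i) = δ ∨ (1 - a i) - a i = δ)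
    (m : ℕ) (hm : m = (univ.filter (fun i => 1/2 < a i)).card)
    (α β : ℝ) (hα : α = (∑ i, a i) / n) (hβ : β = 1 - α)
    (Δ ρ : ℝ) (hΔ : Δ = α - β) (hρ : ρ = (1 - (m:ℝ)/n)/β) :
    ρ = (1 - Δ/δ)/(1 - Δ) := by
  have hn' : (n : ℝ) ≠ 0 := by positivity
  have hα' : α = (1 - δ) / 2 + δ * (m / n) := by
    rw [hα, sum_eq_of_margin hδ hmarg, Fintype.card_fin, ← hm]
    field_simp
  have hΔδ : 1 - Δ / δ = 2 * (1 - m / n) := by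
    rw [hΔ, hβ, hα']
    field_simp
    ring
  have hΔβ : 1 - Δ = 2 * β := by rw [hΔ, hβ]; ring
  rw [hρ, hΔδ, hΔβ, mul_div_mul_left _ _ two_ne_zero]

/-- With equal-population districts each having margin
`δ > 0`, overall minority fraction `β > 0` and overall margin `Δ = α − β`,
the proportionality ratio `ρ = (1 − m/n)/β` satisfies
`ρ = (1 − Δ/δ)/(1 − Δ)`. -/
theorem proportionality_ratio_uniform_margin
    (n : ℕ) (hn : 0 < n) (a : Fin n → ℝ)
    (ha : ∀ i, a i ∈ Set.Icc (0:ℝ) 1)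
    (δ : ℝ) (hδ : 0 < δ)
    (hmarg : ∀ i, a i - (1 - a i) = δ ∨ (1 - a i) - a i = δ)
    (m : ℕ) (hm : m = (univ.filter (fun i => 1/2 < a i)).card)
    (α β : ℝ) (hα : α = (∑ i, a i) / n) (hβ : β = 1 - α)
    (hβ0 : 0 < β)
    (Δ ρ : ℝ) (hΔ : Δ = α - β) (hρ : ρ = (1 - (m:ℝ)/n)/β) :
    ρ = (1 - Δ/δ)/(1 - Δ) :=
  proportionality_ratio_uniform_margin_general n hn a δ hδ hmarg m hm α β hα hβ Δ ρ hΔ hρ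
end

section
/- Let n, m, k be integers with n/2 < m < n and 0 ≤ k ≤ n − m, let δ' ∈ (0, 1] and ε ∈ (0, 1/2). Consider the equal-population districting plan in which k districts have β_i = 1/2 + ε, k districts have β_i = 1/2 − ε, n − m − k districts have β_i = 1/2 + δ'/2, and m − k districts have β_i = 1/2 − δ'/2. Then: (a) the overall minority fraction β = (1/n)·∑_{i=1}^n β_i equals 1/2 − (m/n − 1/2)·δ' and satisfies 0 < β < 1/2; (b) exactly n − m districts are majority-B; and (c) with Δ = 1 − 2β, the proportionality ratio ρ = (1 − m/n)/β equals (1 − Δ/δ')/(1 − Δ). In particular, for any k ≤ n − m there is a plan with 2k districts of arbitrarily small margin 2ε whose proportionality ratio depends only on the margin δ' of the remaining n − 2k districts. -/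
open Finset

/-! Sort the districts into the four blocks of the plan. Each block contributes its size times
its common value to `∑ βᵢ`, and the contributions of the two `ε`-blocks cancel, so
`n β = n/2 − (m − n/2) δ'`; the same block count shows that the majority-B districts are the
`k + (n − m − k)` districts above `1/2`. Then `Δ = (2m/n − 1) δ'`, hence `1 − Δ/δ' = 2(1 − m/n)`
and `1 − Δ = 2β`, which gives the formula for `ρ`. -/

def fourBlocks {α : Type*} (t₁ t₂ t₃ : ℕ) (x₁ x₂ x₃ x₄ : α) (j : ℕ) : α :=
  if j < t₁ then x₁ else if j < t₂ then x₂ else if j < t₃ then x₃ else x₄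

theorem sum_Ico_ite_lt {M : Type*} [AddCommMonoid M] {a c n : ℕ} (hac : a ≤ c) (hcn : c ≤ n)
    (x : M) (g : ℕ → M) :
    ∑ j ∈ Ico a n, (if j < c then x else g j) = (c - a) • x + ∑ j ∈ Ico c n, g j := by
  rw [← sum_Ico_consecutive _ hac hcn, ← Nat.card_Ico a c, ← sum_const]
  congr 1
  · exact sum_congr rfl fun j hj => if_pos (mem_Ico.1 hj).2
  · exact sum_congr rfl fun j hj => if_neg (mem_Ico.1 hj).1.not_gt

theorem sum_fin_fourBlocks {α M : Type*} [AddCommMonoid M] {n t₁ t₂ t₃ : ℕ}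
    (h₁₂ : t₁ ≤ t₂) (h₂₃ : t₂ ≤ t₃) (h₃ : t₃ ≤ n) (x₁ x₂ x₃ x₄ : α) (f : α → M) :
    ∑ i : Fin n, f (fourBlocks t₁ t₂ t₃ x₁ x₂ x₃ x₄ i) =
      t₁ • f x₁ + (t₂ - t₁) • f x₂ + (t₃ - t₂) • f x₃ + (n - t₃) • f x₄ := by
  rw [Fin.sum_univ_eq_sum_range (fun j => f (fourBlocks t₁ t₂ t₃ x₁ x₂ x₃ x₄ j)), range_eq_Ico]
  simp only [fourBlocks, apply_ite f]
  rw [sum_Ico_ite_lt (Nat.zero_le _) (h₁₂.trans (h₂₃.trans h₃)), sum_Ico_ite_lt h₁₂ (h₂₃.trans h₃),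
    sum_Ico_ite_lt h₂₃ h₃, sum_const, Nat.card_Ico, Nat.sub_zero, add_assoc, add_assoc]

theorem half_sub_mul_mem_Ioo {r δ : ℝ} (hr₀ : 1 / 2 < r) (hr₁ : r < 1) (hδ₀ : 0 < δ)
    (hδ₁ : δ ≤ 1) : 0 < 1 / 2 - (r - 1 / 2) * δ ∧ 1 / 2 - (r - 1 / 2) * δ < 1 / 2 := by
  constructor <;> nlinarith

theorem div_eq_one_sub_div_div_one_sub {r δ β : ℝ} (hδ : δ ≠ 0)
    (hβ : β = 1 / 2 - (r - 1 / 2) * δ) :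
    (1 - r) / β = (1 - (1 - 2 * β) / δ) / (1 - (1 - 2 * β)) := by
  have h : 1 - (1 - 2 * β) / δ = 2 * (1 - r) := by
    rw [hβ]
    field_simp
    ring
  rw [h, sub_sub_cancel, mul_div_mul_left _ _ two_ne_zero]

noncomputable def competitivePlan (n m k : ℕ) (δ ε : ℝ) : ℕ → ℝ :=
  fourBlocks k (2 * k) (k + (n - m)) (1/2 + ε) (1/2 - ε) (1/2 + δ/2) (1/2 - δ/2)

theorem sum_competitivePlan {n m k : ℕ} (hmn : m ≤ n) (hk : k ≤ n - m) (hkm : k ≤ m)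
    (δ ε : ℝ) :
    ∑ i : Fin n, competitivePlan n m k δ ε i = n / 2 - (m - n / 2) * δ := by
  refine (sum_fin_fourBlocks (by omega) (by omega) (by omega) _ _ _ _ id).trans ?_
  rw [show 2 * k - k = k by omega, show k + (n - m) - 2 * k = n - m - k by omega,
    show n - (k + (n - m)) = m - k by omega]
  simp only [nsmul_eq_mul, id]
  rw [Nat.cast_sub (by omega), Nat.cast_sub hmn, Nat.cast_sub hkm]
  ring

theorem card_competitivePlan_gt_half {n m k : ℕ} (hk : k ≤ n - m) (hkm : k ≤ m) {δ ε : ℝ}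
    (hδ : 0 < δ) (hε : 0 < ε) :
    #{i : Fin n | 1/2 < competitivePlan n m k δ ε i} = n - m := by
  rw [card_filter]
  refine (sum_fin_fourBlocks (by omega) (by omega) (by omega) _ _ _ _
    fun x : ℝ => if 1/2 < x then 1 else 0).trans ?_
  rw [if_pos (by linarith), if_neg (by linarith), if_pos (by linarith), if_neg (by linarith)]
  simp only [smul_eq_mul]
  omega

theorem competitive_districts_preserve_proportionality_general
    (n m k : ℕ) (hnm : (n:ℝ)/2 < (m:ℝ)) (hmn : m < n) (hk : k ≤ n - m)
    (δ' ε : ℝ) (hδ0 : 0 < δ') (hδ1 : δ' ≤ 1) (hε0 : 0 < ε)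
    (b : Fin n → ℝ)
    (hb : ∀ i : Fin n, b i =
      if (i : ℕ) < k then 1/2 + ε
      else if (i : ℕ) < 2*k then 1/2 - ε
      else if (i : ℕ) < k + (n - m) then 1/2 + δ'/2
      else 1/2 - δ'/2)
    (β Δ ρ : ℝ)
    (hβ : β = (∑ i, b i) / n)
    (hΔ : Δ = 1 - 2*β)
    (hρ : ρ = (1 - (m:ℝ)/n)/β) :
    (β = 1/2 - ((m:ℝ)/n - 1/2) * δ' ∧ 0 < β ∧ β < 1/2) ∧
    (univ.filter (fun i => 1/2 < b i)).card = n - m ∧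
    ρ = (1 - Δ/δ')/(1 - Δ) := by
  have hplan : b = fun i : Fin n => competitivePlan n m k δ' ε i := funext hb
  have hn : (0:ℝ) < n := by exact_mod_cast (Nat.zero_le m).trans_lt hmn
  have hm2 : 1 / 2 < (m:ℝ) / n := by rw [lt_div_iff₀ hn]; linarith
  have hmn' : (m:ℝ) / n < 1 := (div_lt_one hn).2 (by exact_mod_cast hmn)
  have hkm : k ≤ m := by
    have : n < 2 * m := by exact_mod_cast (by linarith : (n:ℝ) < 2 * m)
    omega
  have hβ_eq : β = 1/2 - ((m:ℝ)/n - 1/2) * δ' := by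
    rw [hβ, hplan, sum_competitivePlan hmn.le hk hkm δ' ε]
    field_simp
  refine ⟨⟨hβ_eq, hβ_eq ▸ half_sub_mul_mem_Ioo hm2 hmn' hδ0 hδ1⟩, ?_, ?_⟩
  · rw [hplan]
    exact card_competitivePlan_gt_half hk hkm hδ0 hε0
  · rw [hρ, hΔ]
    exact div_eq_one_sub_div_div_one_sub hδ0.ne' hβ_eq

/-- Given `n/2 < m < n`, `0 ≤ k ≤ n − m`, `δ' ∈ (0,1]` and
`ε ∈ (0,1/2)`, the equal-population plan with `k` districts at `β_i = 1/2 + ε`,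
`k` at `β_i = 1/2 − ε`, `n − m − k` at `β_i = 1/2 + δ'/2` and `m − k` at
`β_i = 1/2 − δ'/2` satisfies: (a) `β = 1/2 − (m/n − 1/2)δ' ∈ (0, 1/2)`;
(b) exactly `n − m` districts are majority-B; (c) with `Δ = 1 − 2β`, the
proportionality ratio `ρ = (1 − m/n)/β` equals `(1 − Δ/δ')/(1 − Δ)`. -/
theorem competitive_districts_preserve_proportionality
    (n m k : ℕ) (hnm : (n:ℝ)/2 < (m:ℝ)) (hmn : m < n) (hk : k ≤ n - m)
    (δ' ε : ℝ) (hδ0 : 0 < δ') (hδ1 : δ' ≤ 1) (hε0 : 0 < ε) (hε2 : ε < 1/2)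
    (b : Fin n → ℝ)
    (hb : ∀ i : Fin n, b i =
      if (i : ℕ) < k then 1/2 + ε
      else if (i : ℕ) < 2*k then 1/2 - ε
      else if (i : ℕ) < k + (n - m) then 1/2 + δ'/2
      else 1/2 - δ'/2)
    (β Δ ρ : ℝ)
    (hβ : β = (∑ i, b i) / n)
    (hΔ : Δ = 1 - 2*β)
    (hρ : ρ = (1 - (m:ℝ)/n)/β) :
    (β = 1/2 - ((m:ℝ)/n - 1/2) * δ' ∧ 0 < β ∧ β < 1/2) ∧
    (univ.filter (fun i => 1/2 < b i)).card = n - m ∧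
    ρ = (1 - Δ/δ')/(1 - Δ) :=
  competitive_districts_preserve_proportionality_general n m k hnm hmn hk δ' ε hδ0 hδ1 hε0 b hb β Δ
    ρ hβ hΔ hρ
end
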